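/- The iterative double auction terminates in finitely many rounds: since each buyer's bid price for each seller can strictly increase only finitely often (bounded by value) and each seller's ask price can strictly decrease only finitely often (bounded by cost), there exists a round after which all bids and asks are identical in two consecutive rounds, triggering termination condition T1. -/

import Mathlib

/-!
Every price sequence only moves by jumps of at least a fixed size, in one direction, and is
bounded in that direction. Once such a sequence is within one jump of its supremum it can no
longer jump, so each of the finitely many sequences is eventually constant, and from some
round on all of them are constant simultaneously.
-/

open Filter

section JumpSequences

variable {α : Type*} [ConditionallyCompleteLinearOrder α] [AddCommGroup α]
  [IsOrderedAddMonoid α]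

theorem eventually_succ_eq_of_jumps_of_bddAbove {f : ℕ → α} {δ : α} (hδ : 0 < δ)
    (hjump : ∀ t, f (t + 1) = f t ∨ f t + δ ≤ f (t + 1)) (hbdd : BddAbove (Set.range f)) :
    ∀ᶠ t in atTop, f (t + 1) = f t := by
  have hmono : Monotone f := monotone_nat_of_le_succ fun t =>
    (hjump t).elim (fun h => h.ge) fun h => (le_add_of_nonneg_right hδ.le).trans h
  obtain ⟨N, hN⟩ : ∃ N, (⨆ t, f t) - δ < f N := exists_lt_of_lt_ciSup (sub_lt_self _ hδ)
  filter_upwards [eventually_ge_atTop N] with t ht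
  refine (hjump t).resolve_right fun hstep => ?_
  have hsup : f (t + 1) < f t + δ :=
    calc f (t + 1) ≤ ⨆ t, f t := le_ciSup hbdd _
      _ < f N + δ := sub_lt_iff_lt_add.1 hN
      _ ≤ f t + δ := add_le_add_left (hmono ht) δ
  exact hstep.not_gt hsup

theorem eventually_succ_eq_of_jumps_of_bddBelow {f : ℕ → α} {ε : α} (hε : 0 < ε)
    (hjump : ∀ t, f (t + 1) = f t ∨ f (t + 1) ≤ f t - ε) (hbdd : BddBelow (Set.range f)) :
    ∀ᶠ t in atTop, f (t + 1) = f t := by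
  have hneg : ∀ t, -f (t + 1) = -f t ∨ -f t + ε ≤ -f (t + 1) := fun t =>
    (hjump t).imp (congrArg Neg.neg) fun h => by rwa [neg_add_eq_sub, le_neg, neg_sub]
  have hbdd' : BddAbove (Set.range fun t => -f t) := by
    rw [← Set.neg_range]
    exact hbdd.neg
  exact (eventually_succ_eq_of_jumps_of_bddAbove hε hneg hbdd').mono fun _ => neg_inj.1

end JumpSequences

theorem auction_terminates_general {B M : Type*} [Fintype B] [Fintype M]
    (bid : B → M → ℕ → ℝ) (ask : M → ℕ → ℝ) (δ ε : ℝ)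
    (hδ : 0 < δ) (hε : 0 < ε)
    (ub : B → M → ℝ) (lb : M → ℝ)
    (hbid_step : ∀ b m t, bid b m (t + 1) = bid b m t ∨
      bid b m t + δ ≤ bid b m (t + 1))
    (hbid_ub : ∀ b m t, bid b m t ≤ ub b m)
    (hask_step : ∀ m t, ask m (t + 1) = ask m t ∨ ask m (t + 1) ≤ ask m t - ε)
    (hask_lb : ∀ m t, lb m ≤ ask m t) :
    ∃ T, (∀ b m, bid b m (T + 1) = bid b m T) ∧ (∀ m, ask m (T + 1) = ask m T) := by
  have hbids : ∀ᶠ t in atTop, ∀ b m, bid b m (t + 1) = bid b m t :=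
    eventually_all.2 fun b => eventually_all.2 fun m =>
      eventually_succ_eq_of_jumps_of_bddAbove hδ (hbid_step b m)
        ⟨ub b m, Set.forall_mem_range.2 (hbid_ub b m)⟩
  have hasks : ∀ᶠ t in atTop, ∀ m, ask m (t + 1) = ask m t :=
    eventually_all.2 fun m =>
      eventually_succ_eq_of_jumps_of_bddBelow hε (hask_step m)
        ⟨lb m, Set.forall_mem_range.2 (hask_lb m)⟩
  exact (hbids.and hasks).exists

/-- Termination of the iterative double auction: with finitely many buyers and
sellers, nondecreasing bid prices with strictly increasing steps of size at
least `δ` bounded above, and nonincreasing ask prices with strictly decreasing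
steps of size at least `ε` bounded below, there exists a round after which all
bids and asks coincide in two consecutive rounds (termination condition T1). -/
theorem auction_terminates {B M : Type*} [Fintype B] [Fintype M]
    (bid : B → M → ℕ → ℝ) (ask : M → ℕ → ℝ) (δ ε : ℝ)
    (hδ : 0 < δ) (hε : 0 < ε)
    (ub : B → M → ℝ) (lb : M → ℝ)
    (hbid_mono : ∀ b m, Monotone (bid b m))
    (hbid_step : ∀ b m t, bid b m (t + 1) = bid b m t ∨
      bid b m t + δ ≤ bid b m (t + 1))
    (hbid_ub : ∀ b m t, bid b m t ≤ ub b m)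
    (hask_mono : ∀ m, Antitone (ask m))
    (hask_step : ∀ m t, ask m (t + 1) = ask m t ∨ ask m (t + 1) ≤ ask m t - ε)
    (hask_lb : ∀ m t, lb m ≤ ask m t) :
    ∃ T, (∀ b m, bid b m (T + 1) = bid b m T) ∧ (∀ m, ask m (T + 1) = ask m T) :=
  auction_terminates_general bid ask δ ε hδ hε ub lb hbid_step hbid_ub hask_step hask_lb
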